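/- Define A_0(r) = (1/2)∫_r^∞ ρ(s) (∫_0^s ρ(u) u du) ds/s for nonnegative ρ. Then for 1 ≤ p < ∞ there is a constant C_p with ‖A_0‖_{L^p(ℝ²)} ≤ C_p ‖ρ‖_{L^1(ℝ²)} ‖ρ‖_{L^p(ℝ²)}, where norms are radial L^p norms on ℝ². -/

import Mathlib

/-!
Since `|∫_0^s ρ(u) u du| ≤ ‖ρ‖_{L¹(r dr)}`, the function `A_0` is dominated by
`‖ρ‖₁ / 2` times the dual Hardy operator `T F(r) = ∫_r^∞ F(s) ds/s` applied to `F = |ρ|`.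
That operator is bounded on `L^p(r dr)`: Hölder's inequality on `(r, ∞)` against `s⁻¹ ∈ L^q`
gives `r · T F(r)^p ≤ (p-1)^(p-1) ∫_r^∞ F^p`, and integrating in `r` turns the right-hand
side into `(p-1)^(p-1) ∫_0^∞ F(s)^p s ds`.
-/

open MeasureTheory Set
open scoped ENNReal NNReal

/-- The measure `r dr` on `(0, ∞)` (radial functions on `ℝ²`). -/
noncomputable def rdr : Measure ℝ :=
  (volume.restrict (Ioi (0:ℝ))).withDensity (fun r => ENNReal.ofReal r)

lemma lintegral_rdr (g : ℝ → ℝ≥0∞) :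
    ∫⁻ x, g x ∂rdr = ∫⁻ x in Ioi 0, ENNReal.ofReal x * g x :=
  lintegral_withDensity_eq_lintegral_mul_non_measurable _ ENNReal.measurable_ofReal
    (ae_of_all _ fun _ => ENNReal.ofReal_lt_top) g

lemma ae_rdr_pos : ∀ᵐ x ∂rdr, 0 < x :=
  withDensity_absolutelyContinuous _ _ (ae_restrict_mem measurableSet_Ioi)

lemma eLpNorm_rdr {ε : Type*} [ENorm ε] {p : ℝ≥0∞} (hp0 : p ≠ 0) (hp : p ≠ ⊤) (f : ℝ → ε) :
    eLpNorm f p rdr = (∫⁻ x in Ioi 0, ENNReal.ofReal x * ‖f x‖ₑ ^ p.toReal) ^ p.toReal⁻¹ := by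
  rw [eLpNorm_eq_lintegral_rpow_enorm_toReal hp0 hp, lintegral_rdr, one_div]

/-- The layer-cake formula for the measure `G(s) ds` on `(0, ∞)` and the function `s ↦ s`. -/
lemma lintegral_Ioi_lintegral_Ioi {G : ℝ → ℝ≥0∞} (hG : Measurable G) :
    ∫⁻ r in Ioi 0, ∫⁻ s in Ioi r, G s = ∫⁻ s in Ioi 0, ENNReal.ofReal s * G s := by
  let μ := (volume.restrict (Ioi (0:ℝ))).withDensity G
  have hpos : 0 ≤ᵐ[μ] id := withDensity_absolutelyContinuous _ _ <|
    ae_restrict_of_forall_mem measurableSet_Ioi fun _ hx => le_of_lt hx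
  calc ∫⁻ r in Ioi 0, ∫⁻ s in Ioi r, G s = ∫⁻ r in Ioi 0, μ {s | r < s} := by
        refine setLIntegral_congr_fun measurableSet_Ioi fun r hr => ?_
        rw [show {s : ℝ | r < s} = Ioi r from rfl, withDensity_apply _ measurableSet_Ioi,
          Measure.restrict_restrict measurableSet_Ioi, inter_eq_left.2 (Ioi_subset_Ioi hr.le)]
    _ = ∫⁻ s, ENNReal.ofReal s ∂μ := (lintegral_eq_lintegral_meas_lt μ hpos aemeasurable_id).symm
    _ = ∫⁻ s in Ioi 0, ENNReal.ofReal s * G s := by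
        rw [lintegral_withDensity_eq_lintegral_mul _ hG ENNReal.measurable_ofReal]
        simp_rw [Pi.mul_apply, mul_comm]

lemma lintegral_Ioi_inv_rpow {q r : ℝ} (hq : 1 < q) (hr : 0 < r) :
    ∫⁻ s in Ioi r, (ENNReal.ofReal s)⁻¹ ^ q = ENNReal.ofReal (r ^ (1 - q) / (q - 1)) := by
  have hint : IntegrableOn (fun s : ℝ => s ^ (-q)) (Ioi r) :=
    integrableOn_Ioi_rpow_of_lt (by linarith) hr
  rw [← neg_div_neg_eq, neg_sub, show 1 - q = -q + 1 by ring,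
    ← integral_Ioi_rpow_of_lt (by linarith) hr, ofReal_integral_eq_lintegral_ofReal hint
      (ae_restrict_of_forall_mem measurableSet_Ioi fun s (hs : r < s) =>
        (Real.rpow_pos_of_pos (hr.trans hs) _).le)]
  refine setLIntegral_congr_fun measurableSet_Ioi fun s (hs : r < s) => ?_
  have hs0 : 0 < s := hr.trans hs
  rw [ENNReal.inv_rpow, ENNReal.ofReal_rpow_of_pos hs0,
    ← ENNReal.ofReal_inv_of_pos (by positivity), Real.rpow_neg hs0.le]

noncomputable def hardyTail (F : ℝ → ℝ≥0∞) (r : ℝ) : ℝ≥0∞ :=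
  ∫⁻ s in Ioi r, F s / ENNReal.ofReal s

lemma measurable_hardyTail (F : ℝ → ℝ≥0∞) : Measurable (hardyTail F) :=
  Antitone.measurable fun _ _ hab =>
    lintegral_mono' (Measure.restrict_mono (Ioi_subset_Ioi hab) le_rfl) le_rfl

lemma ofReal_mul_hardyTail_rpow_le_of_one_lt {p r : ℝ} (hp : 1 < p) (hr : 0 < r)
    {F : ℝ → ℝ≥0∞} (hF : AEMeasurable F (volume.restrict (Ioi r))) :
    ENNReal.ofReal r * hardyTail F r ^ p
      ≤ ENNReal.ofReal ((p - 1) ^ (p - 1)) * ∫⁻ s in Ioi r, F s ^ p := by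
  set q := p.conjExponent with hq
  have hpq : p.HolderConjugate q := .conjExponent hp
  have holder := ENNReal.lintegral_mul_le_Lp_mul_Lq _ hpq hF
    (ENNReal.measurable_ofReal.inv).aemeasurable
  simp only [Pi.mul_apply, Pi.inv_apply, ← div_eq_mul_inv] at holder
  rw [lintegral_Ioi_inv_rpow hpq.symm.lt hr] at holder
  have hweight : r * (r ^ (1 - q) / (q - 1)) ^ (p / q) = (p - 1) ^ (p - 1) := by
    have hp1 : 0 < p - 1 := by linarith
    have hq1 : q - 1 = (p - 1)⁻¹ := by rw [hq, Real.conjExponent]; field_simp; ring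
    have hpq' : p / q = p - 1 := by rw [hq, Real.conjExponent]; field_simp
    rw [show 1 - q = -(q - 1) by ring, hq1, hpq', Real.div_rpow (by positivity) (by positivity),
      ← Real.rpow_mul hr.le, neg_mul, inv_mul_cancel₀ hp1.ne', Real.inv_rpow hp1.le,
      div_inv_eq_mul, Real.rpow_neg_one, ← mul_assoc, mul_inv_cancel₀ hr.ne', one_mul]
  calc ENNReal.ofReal r * hardyTail F r ^ p
      ≤ ENNReal.ofReal r * ((∫⁻ s in Ioi r, F s ^ p) ^ (1 / p)
          * ENNReal.ofReal (r ^ (1 - q) / (q - 1)) ^ (1 / q)) ^ p := by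
        gcongr
        exact holder
    _ = ENNReal.ofReal (r * (r ^ (1 - q) / (q - 1)) ^ (p / q)) * ∫⁻ s in Ioi r, F s ^ p := by
        rw [ENNReal.mul_rpow_of_nonneg _ _ (by linarith), ← ENNReal.rpow_mul, ← ENNReal.rpow_mul,
          one_div_mul_cancel (by linarith), ENNReal.rpow_one, one_div_mul_eq_div,
          ENNReal.ofReal_rpow_of_pos (by have := hpq.symm.lt; positivity),
          ENNReal.ofReal_mul hr.le]
        ring
    _ = ENNReal.ofReal ((p - 1) ^ (p - 1)) * ∫⁻ s in Ioi r, F s ^ p := by rw [hweight]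

lemma ofReal_mul_hardyTail_rpow_le {p r : ℝ} (hp : 1 ≤ p) (hr : 0 < r) {F : ℝ → ℝ≥0∞}
    (hF : Measurable F) :
    ENNReal.ofReal r * hardyTail F r ^ p
      ≤ ENNReal.ofReal ((p - 1) ^ (p - 1)) * ∫⁻ s in Ioi r, F s ^ p := by
  obtain rfl | hp := hp.eq_or_lt
  · simp only [sub_self, Real.rpow_zero, ENNReal.ofReal_one, ENNReal.rpow_one, one_mul, hardyTail]
    rw [← lintegral_const_mul' _ _ ENNReal.ofReal_ne_top]
    refine setLIntegral_mono' measurableSet_Ioi fun s (hs : r < s) => ?_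
    calc ENNReal.ofReal r * (F s / ENNReal.ofReal s)
        ≤ ENNReal.ofReal s * (F s / ENNReal.ofReal s) := by gcongr
      _ = F s := ENNReal.mul_div_cancel (by simpa using hr.trans hs) ENNReal.ofReal_ne_top
  · exact ofReal_mul_hardyTail_rpow_le_of_one_lt hp hr hF.aemeasurable

lemma lintegral_hardyTail_rpow_le {p : ℝ} (hp : 1 ≤ p) {F : ℝ → ℝ≥0∞} (hF : Measurable F) :
    ∫⁻ r in Ioi 0, ENNReal.ofReal r * hardyTail F r ^ p
      ≤ ENNReal.ofReal ((p - 1) ^ (p - 1)) * ∫⁻ s in Ioi 0, ENNReal.ofReal s * F s ^ p := by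
  calc ∫⁻ r in Ioi 0, ENNReal.ofReal r * hardyTail F r ^ p
      ≤ ∫⁻ r in Ioi 0, ENNReal.ofReal ((p - 1) ^ (p - 1)) * ∫⁻ s in Ioi r, F s ^ p :=
        setLIntegral_mono' measurableSet_Ioi fun r hr => ofReal_mul_hardyTail_rpow_le hp hr hF
    _ = ENNReal.ofReal ((p - 1) ^ (p - 1)) * ∫⁻ s in Ioi 0, ENNReal.ofReal s * F s ^ p := by
        rw [lintegral_const_mul' _ _ ENNReal.ofReal_ne_top,
          lintegral_Ioi_lintegral_Ioi (hF.pow_const p)]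

lemma eLpNorm_hardyTail_le {p : ℝ≥0∞} (hp : 1 ≤ p) (hp_top : p ≠ ⊤) {F : ℝ → ℝ≥0∞}
    (hF : Measurable F) :
    eLpNorm (hardyTail F) p rdr
      ≤ ENNReal.ofReal ((p.toReal - 1) ^ (p.toReal - 1)) ^ p.toReal⁻¹ * eLpNorm F p rdr := by
  have hp0 : p ≠ 0 := (zero_lt_one.trans_le hp).ne'
  have hp1 : 1 ≤ p.toReal := by simpa using ENNReal.toReal_mono hp_top hp
  rw [eLpNorm_rdr hp0 hp_top, eLpNorm_rdr hp0 hp_top,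
    ← ENNReal.mul_rpow_of_nonneg _ _ (by positivity)]
  gcongr
  exact lintegral_hardyTail_rpow_le hp1 hF

noncomputable def azero (ρ : ℝ → ℝ) (r : ℝ) : ℝ :=
  (1/2 : ℝ) * ∫ s in Ioi r, ρ s * (∫ u in Ioc (0:ℝ) s, ρ u * u) / s

lemma enorm_integral_Ioc_mul_le (ρ : ℝ → ℝ) (s : ℝ) :
    ‖∫ u in Ioc (0:ℝ) s, ρ u * u‖ₑ ≤ eLpNorm ρ 1 rdr := by
  rw [eLpNorm_one_eq_lintegral_enorm, lintegral_rdr]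
  calc ‖∫ u in Ioc (0:ℝ) s, ρ u * u‖ₑ ≤ ∫⁻ u in Ioc (0:ℝ) s, ‖ρ u * u‖ₑ :=
        enorm_integral_le_lintegral_enorm _
    _ ≤ ∫⁻ u in Ioi 0, ‖ρ u * u‖ₑ := lintegral_mono_set Ioc_subset_Ioi_self
    _ = ∫⁻ u in Ioi 0, ENNReal.ofReal u * ‖ρ u‖ₑ := by
        refine setLIntegral_congr_fun measurableSet_Ioi fun u (hu : 0 < u) => ?_
        rw [enorm_mul, Real.enorm_eq_ofReal hu.le, mul_comm]

lemma enorm_azero_le {ρ : ℝ → ℝ} (hρ : Measurable ρ) {r : ℝ} (hr : 0 < r) :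
    ‖azero ρ r‖ₑ ≤ 2⁻¹ * eLpNorm ρ 1 rdr * hardyTail (‖ρ ·‖ₑ) r := by
  rw [azero, enorm_mul, mul_assoc]
  gcongr
  · simpa using (Real.enorm_natCast 2).ge
  calc ‖∫ s in Ioi r, ρ s * (∫ u in Ioc (0:ℝ) s, ρ u * u) / s‖ₑ
      ≤ ∫⁻ s in Ioi r, ‖ρ s * (∫ u in Ioc (0:ℝ) s, ρ u * u) / s‖ₑ :=
        enorm_integral_le_lintegral_enorm _
    _ ≤ ∫⁻ s in Ioi r, eLpNorm ρ 1 rdr * (‖ρ s‖ₑ / ENNReal.ofReal s) := by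
        refine setLIntegral_mono' measurableSet_Ioi fun s (hs : r < s) => ?_
        rw [div_eq_mul_inv, enorm_mul, enorm_mul, enorm_inv (hr.trans hs).ne',
          Real.enorm_eq_ofReal (hr.trans hs).le, mul_comm (‖ρ s‖ₑ), mul_assoc, ← div_eq_mul_inv]
        gcongr
        exact enorm_integral_Ioc_mul_le ρ s
    _ = eLpNorm ρ 1 rdr * hardyTail (‖ρ ·‖ₑ) r :=
        lintegral_const_mul _ (hρ.enorm.div ENNReal.measurable_ofReal)

/-- With `A_0(r) = (1/2)∫_r^∞ ρ(s)(∫_0^s ρ(u) u du) ds/s` for nonnegative `ρ`, for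
`1 ≤ p < ∞` one has `‖A_0‖_{L^p(ℝ²)} ≤ C_p ‖ρ‖_{L¹(ℝ²)} ‖ρ‖_{L^p(ℝ²)}`. -/
theorem Azero_Lp_bound (p : ℝ≥0∞) (hp1 : 1 ≤ p) (hp2 : p ≠ ⊤) :
    ∃ C : ℝ≥0∞, C ≠ ⊤ ∧ ∀ ρ : ℝ → ℝ, Measurable ρ → (∀ s, 0 ≤ ρ s) →
      eLpNorm (fun r => (1/2 : ℝ) * ∫ s in Ioi r, ρ s * (∫ u in Ioc (0:ℝ) s, ρ u * u) / s) p rdr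
        ≤ C * eLpNorm ρ 1 rdr * eLpNorm ρ p rdr := by
  have hp0 : p ≠ 0 := (zero_lt_one.trans_le hp1).ne'
  set K := ENNReal.ofReal ((p.toReal - 1) ^ (p.toReal - 1)) ^ p.toReal⁻¹
  refine ⟨2⁻¹ * K, by finiteness, fun ρ hρ _ => ?_⟩
  calc eLpNorm (azero ρ) p rdr
      ≤ 2⁻¹ * eLpNorm ρ 1 rdr * eLpNorm (hardyTail (‖ρ ·‖ₑ)) p rdr := by
        rw [eLpNorm_eq_eLpNorm' hp0 hp2, eLpNorm_eq_eLpNorm' hp0 hp2]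
        exact eLpNorm'_le_mul_eLpNorm'_of_ae_le_mul
          (measurable_hardyTail _).aestronglyMeasurable
          (ae_rdr_pos.mono fun r hr => enorm_azero_le hρ hr) (ENNReal.toReal_pos hp0 hp2)
    _ ≤ 2⁻¹ * eLpNorm ρ 1 rdr * (K * eLpNorm ρ p rdr) := by
        gcongr
        simpa only [eLpNorm_enorm] using eLpNorm_hardyTail_le hp1 hp2 hρ.enorm
    _ = 2⁻¹ * K * eLpNorm ρ 1 rdr * eLpNorm ρ p rdr := by ring
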